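/- arXiv:2211.02284 — 4 statements merged into one kernel-verified Lean document; each statement's English description precedes it below -/
import Mathlib

section
/- For β ∈ [0,1), the function f(W) = -(1/B)Σ_{i,j} w_{ij} log p_{ij} + ((1-β)/B)Σ_{i,j} w_{ij} log w_{ij} + β Σ_j w̄_j log w̄_j, where w̄_j = (1/B)Σ_i w_{ij}, is strictly convex on the positive orthant ℝ_{>0}^{B×K}. -/
open Finset Real

lemma strictConvexOn_const_mul {E : Type*} [AddCommMonoid E] [Module ℝ E]
    {s : Set E} {f : E → ℝ} {c : ℝ} (hc : 0 < c)
    (hf : StrictConvexOn ℝ s f) : StrictConvexOn ℝ s (fun x => c * f x) := by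
  refine ⟨hf.1, fun x hx y hy hxy a b ha hb hab => ?_⟩
  have := hf.2 hx hy hxy ha hb hab
  simp only [smul_eq_mul] at *
  nlinarith

lemma orthant_convex (B K : ℕ) :
    Convex ℝ {W : Fin B → Fin K → ℝ | ∀ i j, 0 < W i j} := by
  intro x hx y hy a b ha hb hab
  intro i j
  simp only [Pi.add_apply, Pi.smul_apply, smul_eq_mul]
  rcases ha.lt_or_eq with ha' | ha'
  · exact add_pos_of_pos_of_nonneg (mul_pos ha' (hx i j)) (mul_nonneg hb (hy i j).le)
  · have hb' : b = 1 := by linarith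
    have h2 : (0:ℝ) < b * y i j := by rw [hb']; simpa using hy i j
    nlinarith [hx i j]

lemma entropy_strict (B K : ℕ) :
    StrictConvexOn ℝ {W : Fin B → Fin K → ℝ | ∀ i j, 0 < W i j}
      (fun W => ∑ i, ∑ j, W i j * Real.log (W i j)) := by
  refine ⟨orthant_convex B K, fun x hx y hy hxy a b ha hb hab => ?_⟩
  simp only [smul_eq_mul, Pi.add_apply, Pi.smul_apply, smul_eq_mul]
  have hxy' : ∃ p : Fin B × Fin K, x p.1 p.2 ≠ y p.1 p.2 := by
    by_contra h
    push_neg at h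
    exact hxy (funext fun i => funext fun j => h (i, j))
  obtain ⟨p₀, hp₀⟩ := hxy'
  have key : ∑ p : Fin B × Fin K, (a * x p.1 p.2 + b * y p.1 p.2) *
        Real.log (a * x p.1 p.2 + b * y p.1 p.2)
      < ∑ p : Fin B × Fin K, (a * (x p.1 p.2 * Real.log (x p.1 p.2))
        + b * (y p.1 p.2 * Real.log (y p.1 p.2))) := by
    refine Finset.sum_lt_sum (fun p _ => ?_) ⟨p₀, Finset.mem_univ _, ?_⟩
    · have := Real.convexOn_mul_log.2 (Set.mem_Ici.2 (hx p.1 p.2).le)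
        (Set.mem_Ici.2 (hy p.1 p.2).le) ha.le hb.le hab
      simpa using this
    · have := Real.strictConvexOn_mul_log.2 (Set.mem_Ici.2 (hx p₀.1 p₀.2).le)
        (Set.mem_Ici.2 (hy p₀.1 p₀.2).le) hp₀ ha hb hab
      simpa using this
  have expand := key
  rw [Finset.sum_add_distrib, ← Finset.mul_sum, ← Finset.mul_sum] at expand
  simpa [Fintype.sum_prod_type] using expand

/-- For `β ∈ [0,1)`, the MIRA objective
`f(W) = -(1/B) ∑ᵢⱼ wᵢⱼ log pᵢⱼ + ((1-β)/B) ∑ᵢⱼ wᵢⱼ log wᵢⱼ + β ∑ⱼ w̄ⱼ log w̄ⱼ`,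
with `w̄ⱼ = (1/B) ∑ᵢ wᵢⱼ`, is strictly convex on the positive orthant. -/
theorem stmt_1 (B K : ℕ) (hB : 0 < B) (hK : 0 < K) (β : ℝ) (hβ0 : 0 ≤ β) (hβ1 : β < 1)
    (P : Fin B → Fin K → ℝ) (hP : ∀ i j, 0 < P i j) :
    StrictConvexOn ℝ {W : Fin B → Fin K → ℝ | ∀ i j, 0 < W i j}
      (fun W =>
        -(1 / (B : ℝ)) * ∑ i, ∑ j, W i j * Real.log (P i j)
          + ((1 - β) / (B : ℝ)) * ∑ i, ∑ j, W i j * Real.log (W i j)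
          + β * ∑ j, ((1 / (B : ℝ)) * ∑ i, W i j) *
              Real.log ((1 / (B : ℝ)) * ∑ i, W i j)) := by
  have hS := orthant_convex B K
  have hBpos : (0:ℝ) < B := by exact_mod_cast hB
  have hlin : ConvexOn ℝ {W : Fin B → Fin K → ℝ | ∀ i j, 0 < W i j}
      (fun W => -(1 / (B : ℝ)) * ∑ i, ∑ j, W i j * Real.log (P i j)) := by
    refine ⟨hS, fun x hx y hy a b ha hb hab => le_of_eq ?_⟩
    simp only [Pi.add_apply, Pi.smul_apply, smul_eq_mul, add_mul, Finset.sum_add_distrib,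
      mul_assoc, ← Finset.mul_sum]
    ring
  have hstrict : StrictConvexOn ℝ {W : Fin B → Fin K → ℝ | ∀ i j, 0 < W i j}
      (fun W => ((1 - β) / (B : ℝ)) * ∑ i, ∑ j, W i j * Real.log (W i j)) :=
    strictConvexOn_const_mul (div_pos (by linarith) hBpos) (entropy_strict B K)
  have hbar : ConvexOn ℝ {W : Fin B → Fin K → ℝ | ∀ i j, 0 < W i j}
      (fun W => β * ∑ j, ((1 / (B : ℝ)) * ∑ i, W i j) *
          Real.log ((1 / (B : ℝ)) * ∑ i, W i j)) := by
    refine ⟨hS, fun x hx y hy a b ha hb hab => ?_⟩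
    simp only [smul_eq_mul, Pi.add_apply, Pi.smul_apply]
    have hj : ∀ j : Fin K,
        ((1 / (B : ℝ)) * ∑ i, (a * x i j + b * y i j)) *
          Real.log ((1 / (B : ℝ)) * ∑ i, (a * x i j + b * y i j))
        ≤ a * (((1 / (B : ℝ)) * ∑ i, x i j) * Real.log ((1 / (B : ℝ)) * ∑ i, x i j))
          + b * (((1 / (B : ℝ)) * ∑ i, y i j) * Real.log ((1 / (B : ℝ)) * ∑ i, y i j)) := by
      intro j
      have hmx : (0:ℝ) ≤ (1 / (B : ℝ)) * ∑ i, x i j := by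
        have : (0:ℝ) ≤ ∑ i, x i j := Finset.sum_nonneg fun i _ => (hx i j).le
        positivity
      have hmy : (0:ℝ) ≤ (1 / (B : ℝ)) * ∑ i, y i j := by
        have : (0:ℝ) ≤ ∑ i, y i j := Finset.sum_nonneg fun i _ => (hy i j).le
        positivity
      have hlin' : (1 / (B : ℝ)) * ∑ i, (a * x i j + b * y i j)
          = a * ((1 / (B : ℝ)) * ∑ i, x i j) + b * ((1 / (B : ℝ)) * ∑ i, y i j) := by
        rw [Finset.sum_add_distrib]
        simp only [mul_assoc, ← Finset.mul_sum]
        ring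
      rw [hlin']
      have := Real.convexOn_mul_log.2 (Set.mem_Ici.2 hmx) (Set.mem_Ici.2 hmy) ha hb hab
      simpa using this
    calc β * ∑ j, ((1 / (B : ℝ)) * ∑ i, (a * x i j + b * y i j)) *
            Real.log ((1 / (B : ℝ)) * ∑ i, (a * x i j + b * y i j))
        ≤ β * ∑ j, (a * (((1 / (B : ℝ)) * ∑ i, x i j) * Real.log ((1 / (B : ℝ)) * ∑ i, x i j))
            + b * (((1 / (B : ℝ)) * ∑ i, y i j) * Real.log ((1 / (B : ℝ)) * ∑ i, y i j))) :=
          mul_le_mul_of_nonneg_left (Finset.sum_le_sum fun j _ => hj j) hβ0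
      _ = a * (β * ∑ j, ((1 / (B : ℝ)) * ∑ i, x i j) * Real.log ((1 / (B : ℝ)) * ∑ i, x i j))
            + b * (β * ∑ j, ((1 / (B : ℝ)) * ∑ i, y i j) * Real.log ((1 / (B : ℝ)) * ∑ i, y i j)) := by
          rw [Finset.sum_add_distrib, ← Finset.mul_sum, ← Finset.mul_sum]
          ring
  exact (hlin.add_strictConvexOn hstrict).add_convexOn hbar
end

section
/- For a ∈ ℝ_{>0}^B, β ∈ [0,1), and x ∈ ℝ_{>0}^B, the Hessian quadratic form of h_a(x) = ((1/B)Σ_i a_i/x_i)^{-β} satisfies ωᵀ∇²h_a(x)ω ≤ -β(1-β) r(x)^{-β-2} ((1/B)Σ_i a_i|ω_i|/x_i²)² ≤ 0 for all ω ∈ ℝ^B, where r(x) = (1/B)Σ_i a_i/x_i. -/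
open Finset Real

/-- The Hessian quadratic form of `h_a(x) = ((1/B) ∑ i, a i / x i) ^ (-β)` satisfies
`ωᵀ ∇²h_a(x) ω ≤ -β (1-β) r(x)^(-β-2) ((1/B) ∑ i, a i |ω i| / x i ^ 2) ^ 2 ≤ 0`,
where `r(x) = (1/B) ∑ i, a i / x i` and the Hessian entries are as computed in the paper. -/
theorem stmt_6 (B : ℕ) (hB : 0 < B) (a : Fin B → ℝ) (ha : ∀ i, 0 < a i)
    (β : ℝ) (hβ0 : 0 ≤ β) (hβ1 : β < 1)
    (x : Fin B → ℝ) (hx : ∀ i, 0 < x i) (ω : Fin B → ℝ)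
    (r : ℝ) (hr : r = (1 / (B : ℝ)) * ∑ i, a i / x i)
    (H : Fin B → Fin B → ℝ)
    (hHoff : ∀ l m, l ≠ m →
      H l m = β * (β + 1) * r ^ (-β - 2) * (a l / ((B : ℝ) * x l ^ 2)) *
        (a m / ((B : ℝ) * x m ^ 2)))
    (hHdiag : ∀ l,
      H l l = β * (β + 1) * r ^ (-β - 2) * (a l / ((B : ℝ) * x l ^ 2)) ^ 2
        - 2 * β * r ^ (-β - 1) * (a l / ((B : ℝ) * x l ^ 3))) :
    (∑ l, ∑ m, ω l * H l m * ω m) ≤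
        -β * (1 - β) * r ^ (-β - 2) * ((1 / (B : ℝ)) * ∑ i, a i * |ω i| / x i ^ 2) ^ 2 ∧
      -β * (1 - β) * r ^ (-β - 2) * ((1 / (B : ℝ)) * ∑ i, a i * |ω i| / x i ^ 2) ^ 2 ≤ 0 := by
  have hBpos : (0 : ℝ) < (B : ℝ) := by exact_mod_cast hB
  haveI : Nonempty (Fin B) := Fin.pos_iff_nonempty.mp hB
  have hr0 : 0 < r := by
    rw [hr]
    have h1 : (0 : ℝ) < ∑ i, a i / x i :=
      Finset.sum_pos (fun i _ => div_pos (ha i) (hx i)) Finset.univ_nonempty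
    have h2 : (0 : ℝ) < 1 / (B : ℝ) := by positivity
    exact mul_pos h2 h1
  set c : Fin B → ℝ := fun l => a l / ((B : ℝ) * x l ^ 2) with hc
  have hcpos : ∀ l, 0 < c l := fun l => div_pos (ha l) (mul_pos hBpos (pow_pos (hx l) 2))
  have hp1 : ∀ l, 0 < a l / ((B : ℝ) * x l) := fun l => div_pos (ha l) (mul_pos hBpos (hx l))
  have hp3 : ∀ l, 0 < a l / ((B : ℝ) * x l ^ 3) :=
    fun l => div_pos (ha l) (mul_pos hBpos (pow_pos (hx l) 3))
  set K : ℝ := β * (β + 1) * r ^ (-β - 2) with hK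
  set D : Fin B → ℝ := fun l => 2 * β * r ^ (-β - 1) * (a l / ((B : ℝ) * x l ^ 3)) with hD
  set A : ℝ := ∑ l, c l * ω l with hA
  set S : ℝ := ∑ l, c l * |ω l| with hS
  set T : ℝ := ∑ l, (a l / ((B : ℝ) * x l ^ 3)) * ω l ^ 2 with hT
  have hrp2 : (0 : ℝ) < r ^ (-β - 2) := Real.rpow_pos_of_pos hr0 _
  have hrp1 : (0 : ℝ) < r ^ (-β - 1) := Real.rpow_pos_of_pos hr0 _
  -- rewrite the quadratic form
  have key : ∀ l m : Fin B, ω l * H l m * ω m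
      = K * ((c l * ω l) * (c m * ω m)) - (if l = m then D l * ω l ^ 2 else 0) := by
    intro l m
    by_cases h : l = m
    · subst h
      rw [hHdiag l]
      rw [if_pos rfl]
      simp only [hK, hc, hD]
      ring
    · rw [hHoff l m h]
      simp only [if_neg h, hK, hc]
      ring
  have hsum : (∑ l, ∑ m, ω l * H l m * ω m) = K * A ^ 2 - ∑ l, D l * ω l ^ 2 := by
    simp_rw [key, Finset.sum_sub_distrib]
    congr 1
    · rw [hA, sq, Finset.sum_mul_sum, Finset.mul_sum]
      congr 1; ext l; rw [Finset.mul_sum]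
    · congr 1; ext l
      simp
  have hDsum : (∑ l, D l * ω l ^ 2) = 2 * β * r ^ (-β - 1) * T := by
    rw [hT, Finset.mul_sum]
    congr 1; ext l
    simp only [hD]; ring
  -- |A| ≤ S hence A² ≤ S²
  have hAS : A ^ 2 ≤ S ^ 2 := by
    have h1 : |A| ≤ S := by
      calc |A| ≤ ∑ l, |c l * ω l| := Finset.abs_sum_le_sum_abs _ _
        _ = S := by
          apply Finset.sum_congr rfl
          intro l _
          rw [abs_mul, abs_of_pos (hcpos l)]
    have := abs_nonneg A
    nlinarith [abs_mul_abs_self A]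
  have hSnn : 0 ≤ S :=
    Finset.sum_nonneg fun l _ => mul_nonneg (hcpos l).le (abs_nonneg _)
  -- Cauchy–Schwarz : S² ≤ r * T
  have hCS : S ^ 2 ≤ r * T := by
    have hcs := Finset.sum_mul_sq_le_sq_mul_sq Finset.univ
      (fun l => Real.sqrt (a l / ((B : ℝ) * x l)))
      (fun l => Real.sqrt (a l / ((B : ℝ) * x l ^ 3)) * |ω l|)
    have e1 : ∀ l : Fin B, Real.sqrt (a l / ((B : ℝ) * x l)) *
        (Real.sqrt (a l / ((B : ℝ) * x l ^ 3)) * |ω l|) = c l * |ω l| := by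
      intro l
      rw [← mul_assoc, ← Real.sqrt_mul (hp1 l).le]
      have : a l / ((B : ℝ) * x l) * (a l / ((B : ℝ) * x l ^ 3)) = (c l) ^ 2 := by
        rw [hc]; field_simp
      rw [this, Real.sqrt_sq (le_of_lt (hcpos l))]
    have e2 : ∀ l : Fin B, Real.sqrt (a l / ((B : ℝ) * x l)) ^ 2
        = a l / ((B : ℝ) * x l) := fun l => Real.sq_sqrt (hp1 l).le
    have e3 : ∀ l : Fin B, (Real.sqrt (a l / ((B : ℝ) * x l ^ 3)) * |ω l|) ^ 2
        = (a l / ((B : ℝ) * x l ^ 3)) * ω l ^ 2 := by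
      intro l
      rw [mul_pow, Real.sq_sqrt (hp3 l).le, sq_abs]
    have er : (∑ l, Real.sqrt (a l / ((B : ℝ) * x l)) ^ 2) = r := by
      rw [hr, Finset.mul_sum]
      apply Finset.sum_congr rfl
      intro l _
      rw [e2 l]
      field_simp
    simp_rw [e1, e3, er] at hcs
    rwa [hS, hT]
  -- conclude
  have hrr : r ^ (-β - 2) * r = r ^ (-β - 1) := by
    rw [← Real.rpow_add_one (ne_of_gt hr0)]
    congr 1
    ring
  have hmain : K * A ^ 2 - 2 * β * r ^ (-β - 1) * T
      ≤ -β * (1 - β) * r ^ (-β - 2) * S ^ 2 := by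
    have hKnn : 0 ≤ K := by
      rw [hK]
      exact mul_nonneg (mul_nonneg hβ0 (by linarith)) hrp2.le
    have h1 : K * A ^ 2 ≤ K * S ^ 2 := mul_le_mul_of_nonneg_left hAS hKnn
    have h2 : r ^ (-β - 2) * S ^ 2 ≤ r ^ (-β - 1) * T := by
      calc r ^ (-β - 2) * S ^ 2 ≤ r ^ (-β - 2) * (r * T) :=
            mul_le_mul_of_nonneg_left hCS hrp2.le
        _ = r ^ (-β - 1) * T := by rw [← hrr]; ring
    have h3 : 2 * β * (r ^ (-β - 2) * S ^ 2) ≤ 2 * β * (r ^ (-β - 1) * T) :=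
      mul_le_mul_of_nonneg_left h2 (by linarith)
    have h4 : K * S ^ 2 - 2 * β * (r ^ (-β - 2) * S ^ 2)
        = -β * (1 - β) * r ^ (-β - 2) * S ^ 2 := by rw [hK]; ring
    linarith
  have hSgoal : (1 / (B : ℝ)) * ∑ i, a i * |ω i| / x i ^ 2 = S := by
    rw [hS, Finset.mul_sum]
    apply Finset.sum_congr rfl
    intro l _
    simp only [hc]
    field_simp
  constructor
  · rw [hsum, hDsum, hSgoal]
    exact hmain
  · rw [hSgoal]
    have h0 : 0 ≤ β * (1 - β) * r ^ (-β - 2) * S ^ 2 :=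
      mul_nonneg (mul_nonneg (mul_nonneg hβ0 (by linarith)) hrp2.le) (sq_nonneg S)
    linarith
end

section
/- For Q ∈ ℝ_{>0}^{B×K} and β ∈ [0,1), each function g_j(v) = ((1/B)Σ_{i=1}^B q_{ij} / (Σ_{k=1}^K v_k q_{ik}))^{-β} is concave on ℝ_{>0}^K. -/
open Finset Real

lemma cs_key {B : ℕ} (a p u : Fin B → ℝ) (ha : ∀ i, 0 < a i) (_hp : ∀ i, 0 < p i)
    (hu : ∀ i, 0 < u i) :
    (∑ i, a i / p i) ^ 2 ≤ (∑ i, (a i / p i) ^ 2 / a i * u i) * (∑ i, a i / u i) := by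
  have h := Finset.sum_mul_sq_le_sq_mul_sq Finset.univ
    (fun i => a i / p i * Real.sqrt (u i / a i)) (fun i => Real.sqrt (a i / u i))
  have h1 : ∀ i : Fin B, a i / p i * Real.sqrt (u i / a i) * Real.sqrt (a i / u i)
      = a i / p i := by
    intro i
    rw [mul_assoc, ← Real.sqrt_mul (div_nonneg (hu i).le (ha i).le)]
    rw [show u i / a i * (a i / u i) = 1 by
      rw [div_mul_div_comm, mul_comm, div_self (mul_pos (ha i) (hu i)).ne']]
    simp
  have h2 : ∀ i : Fin B, (a i / p i * Real.sqrt (u i / a i)) ^ 2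
      = (a i / p i) ^ 2 / a i * u i := by
    intro i
    rw [mul_pow, Real.sq_sqrt (div_nonneg (hu i).le (ha i).le)]
    rw [← mul_div_assoc, div_mul_eq_mul_div]
  have h3 : ∀ i : Fin B, (Real.sqrt (a i / u i)) ^ 2 = a i / u i := fun i =>
    Real.sq_sqrt (div_nonneg (ha i).le (hu i).le)
  simp only [h1, h2, h3] at h
  exact h

/-- For a strictly positive matrix `Q` and `β ∈ [0,1)`, each function
`g_j(v) = ((1/B) ∑ i, q i j / (∑ k, v k * q i k)) ^ (-β)` is concave on the
positive orthant of `ℝ^K`. -/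
theorem stmt_7 (B K : ℕ) (hB : 0 < B) (hK : 0 < K)
    (Q : Fin B → Fin K → ℝ) (hQ : ∀ i k, 0 < Q i k)
    (β : ℝ) (hβ0 : 0 ≤ β) (hβ1 : β < 1) (j : Fin K) :
    ConcaveOn ℝ {v : Fin K → ℝ | ∀ k, 0 < v k}
      (fun v => ((1 / (B : ℝ)) * ∑ i, Q i j / (∑ k, v k * Q i k)) ^ (-β)) := by
  have hBpos : (0 : ℝ) < B := Nat.cast_pos.mpr hB
  have hBne : Finset.univ.Nonempty (α := Fin B) := ⟨⟨0, hB⟩, mem_univ _⟩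
  constructor
  · -- convexity of positive orthant
    intro x hx y hy a b ha hb hab
    intro k
    rcases eq_or_lt_of_le ha with h | h
    · have : b = 1 := by linarith
      simpa [← h, this] using hy k
    · have h1 : 0 < a * x k := mul_pos h (hx k)
      have h2 : 0 ≤ b * y k := mul_nonneg hb (hy k).le
      simpa using by linarith
  · intro x hx y hy a b ha hb hab
    -- linear forms
    set lx : Fin B → ℝ := fun i => ∑ k, x k * Q i k with hlxdef
    set ly : Fin B → ℝ := fun i => ∑ k, y k * Q i k with hlydef
    have hlx : ∀ i, 0 < lx i := fun i =>
      Finset.sum_pos (fun k _ => mul_pos (hx k) (hQ i k)) ⟨j, mem_univ _⟩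
    have hly : ∀ i, 0 < ly i := fun i =>
      Finset.sum_pos (fun k _ => mul_pos (hy k) (hQ i k)) ⟨j, mem_univ _⟩
    set lz : Fin B → ℝ := fun i => a * lx i + b * ly i with hlzdef
    have hlz : ∀ i, 0 < lz i := by
      intro i
      rcases eq_or_lt_of_le ha with h | h
      · have hb1 : b = 1 := by linarith
        simp [lz, ← h, hb1, hly i]
      · exact add_pos_of_pos_of_nonneg (mul_pos h (hlx i))
          (mul_nonneg hb (hly i).le)
    have hzl : ∀ i, (∑ k, (a • x + b • y) k * Q i k) = lz i := by
      intro i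
      simp only [lz, lx, ly, Pi.add_apply, Pi.smul_apply, smul_eq_mul, add_mul,
        Finset.sum_add_distrib, Finset.mul_sum, mul_assoc]
    -- sums
    set Sx : ℝ := ∑ i, Q i j / lx i with hSxdef
    set Sy : ℝ := ∑ i, Q i j / ly i with hSydef
    set Sz : ℝ := ∑ i, Q i j / lz i with hSzdef
    have hSx : 0 < Sx := Finset.sum_pos (fun i _ => div_pos (hQ i j) (hlx i)) hBne
    have hSy : 0 < Sy := Finset.sum_pos (fun i _ => div_pos (hQ i j) (hly i)) hBne
    have hSz : 0 < Sz := Finset.sum_pos (fun i _ => div_pos (hQ i j) (hlz i)) hBne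
    -- weights
    set W : (Fin B → ℝ) → ℝ := fun u => ∑ i, (Q i j / lz i) ^ 2 / Q i j * u i with hWdef
    have hWx : Sz ^ 2 ≤ W lx * Sx := cs_key (fun i => Q i j) lz lx (fun i => hQ i j) hlz hlx
    have hWy : Sz ^ 2 ≤ W ly * Sy := cs_key (fun i => Q i j) lz ly (fun i => hQ i j) hlz hly
    have hWz : W lz = Sz := by
      apply Finset.sum_congr rfl
      intro i _
      have hq := hQ i j
      have hp := hlz i
      field_simp
    have hsplit : Sz = a * W lx + b * W ly := by
      rw [← hWz]
      simp only [W, lz, mul_add, Finset.mul_sum, ← Finset.sum_add_distrib]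
      apply Finset.sum_congr rfl
      intro i _
      ring
    -- reciprocal concavity : a * Sx⁻¹ + b * Sy⁻¹ ≤ Sz⁻¹
    have hrec : a * Sx⁻¹ + b * Sy⁻¹ ≤ Sz⁻¹ := by
      have h1 : Sz ^ 2 * Sx⁻¹ ≤ W lx := by
        have := mul_le_mul_of_nonneg_right hWx (inv_nonneg.mpr hSx.le)
        rwa [mul_assoc, mul_inv_cancel₀ hSx.ne', mul_one] at this
      have h2 : Sz ^ 2 * Sy⁻¹ ≤ W ly := by
        have := mul_le_mul_of_nonneg_right hWy (inv_nonneg.mpr hSy.le)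
        rwa [mul_assoc, mul_inv_cancel₀ hSy.ne', mul_one] at this
      have hmain : Sz ^ 2 * (a * Sx⁻¹ + b * Sy⁻¹) ≤ Sz := by
        have ha1 := mul_le_mul_of_nonneg_left h1 ha
        have hb1 := mul_le_mul_of_nonneg_left h2 hb
        nlinarith [hsplit]
      have hzz : Sz * Sz⁻¹ = 1 := mul_inv_cancel₀ hSz.ne'
      have hmm := mul_le_mul_of_nonneg_right hmain (sq_nonneg Sz⁻¹)
      have e1 : Sz ^ 2 * (a * Sx⁻¹ + b * Sy⁻¹) * Sz⁻¹ ^ 2 = a * Sx⁻¹ + b * Sy⁻¹ := by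
        have h11 : Sz ^ 2 * Sz⁻¹ ^ 2 = 1 := by rw [← mul_pow, hzz, one_pow]
        calc Sz ^ 2 * (a * Sx⁻¹ + b * Sy⁻¹) * Sz⁻¹ ^ 2
            = Sz ^ 2 * Sz⁻¹ ^ 2 * (a * Sx⁻¹ + b * Sy⁻¹) := by ring
          _ = a * Sx⁻¹ + b * Sy⁻¹ := by rw [h11, one_mul]
      have e2 : Sz * Sz⁻¹ ^ 2 = Sz⁻¹ := by rw [sq, ← mul_assoc, hzz, one_mul]
      rw [e1, e2] at hmm
      exact hmm
    -- pass to T = ((1/B) * S)⁻¹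
    have hinv : ∀ S : ℝ, 0 < S → ((1 / (B:ℝ)) * S)⁻¹ = B * S⁻¹ := by
      intro S hS
      rw [mul_inv, one_div, inv_inv]
    have hT : a * ((1/(B:ℝ)) * Sx)⁻¹ + b * ((1/(B:ℝ)) * Sy)⁻¹ ≤ ((1/(B:ℝ)) * Sz)⁻¹ := by
      rw [hinv Sx hSx, hinv Sy hSy, hinv Sz hSz]
      nlinarith [mul_le_mul_of_nonneg_left hrec hBpos.le]
    -- rpow conversion
    have hkey : ∀ t : ℝ, 0 < t → t ^ (-β) = (t⁻¹) ^ β := by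
      intro t ht
      rw [Real.inv_rpow ht.le, ← Real.rpow_neg ht.le]
    have hB1 : (0:ℝ) < 1/(B:ℝ) := one_div_pos.mpr hBpos
    have hHx : (0:ℝ) < (1/(B:ℝ)) * Sx := mul_pos hB1 hSx
    have hHy : (0:ℝ) < (1/(B:ℝ)) * Sy := mul_pos hB1 hSy
    have hHz : (0:ℝ) < (1/(B:ℝ)) * Sz := mul_pos hB1 hSz
    have hgoalz : (∑ i, Q i j / (∑ k, (a • x + b • y) k * Q i k)) = Sz :=
      Finset.sum_congr rfl fun i _ => by rw [hzl i]
    simp only [smul_eq_mul, hgoalz]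
    rw [hkey _ hHx, hkey _ hHy, hkey _ hHz]
    set Tx := ((1/(B:ℝ)) * Sx)⁻¹ with hTx
    set Ty := ((1/(B:ℝ)) * Sy)⁻¹ with hTy
    set Tz := ((1/(B:ℝ)) * Sz)⁻¹ with hTz
    have hTx0 : 0 ≤ Tx := inv_nonneg.mpr hHx.le
    have hTy0 : 0 ≤ Ty := inv_nonneg.mpr hHy.le
    have h1 : a * Tx ^ β + b * Ty ^ β ≤ (a * Tx + b * Ty) ^ β := by
      have := (Real.concaveOn_rpow hβ0 hβ1.le).2 (Set.mem_Ici.mpr hTx0)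
        (Set.mem_Ici.mpr hTy0) ha hb hab
      simpa using this
    have h2 : (a * Tx + b * Ty) ^ β ≤ Tz ^ β :=
      Real.rpow_le_rpow (add_nonneg (mul_nonneg ha hTx0) (mul_nonneg hb hTy0)) hT hβ0
    exact h1.trans h2
end

section
/- If W* with all rows in the interior of the simplex Δ_K minimizes f(W) = -(1/B)Σ w_{ij} log p_{ij} + ((1-β)/B)Σ w_{ij} log w_{ij} + β Σ_j w̄_j log w̄_j over W with rows in Δ_K, then for all i,j: w*_{ij} = (w̄*_j)^{-β/(1-β)} p_{ij}^{1/(1-β)} / Σ_{k=1}^K (w̄*_k)^{-β/(1-β)} p_{ik}^{1/(1-β)}. -/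
/-!
At an interior minimiser the objective is stationary along every direction that keeps the row
sums fixed, in particular along `e_j - e_l` inside a single row `i`. The first variation in that
direction is `(g i j - g i l) / B` with `g i k = (1 - β) log w_ik - log p_ik + β log w̄_k`, so
`g i` is constant along the row. Exponentiating, row `i` of `W` is proportional to
`w̄_k ^ (-β/(1-β)) * p_ik ^ (1/(1-β))`, and the row sum `1` fixes the constant of proportionality.
-/

open Finset Real Filter Topology

noncomputable def miraObjective {B K : ℕ} (β : ℝ) (P W : Fin B → Fin K → ℝ) : ℝ :=
  -(1 / (B : ℝ)) * ∑ i, ∑ j, W i j * log (P i j)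
    + ((1 - β) / (B : ℝ)) * ∑ i, ∑ j, W i j * log (W i j)
    + β * ∑ j, ((1 / (B : ℝ)) * ∑ i, W i j) * log ((1 / (B : ℝ)) * ∑ i, W i j)

theorem hasDerivAt_affine_mul_log {a : ℝ} (ha : a ≠ 0) (d : ℝ) :
    HasDerivAt (fun t => (a + t * d) * log (a + t * d)) (d * (log a + 1)) 0 := by
  have hline : HasDerivAt (fun t : ℝ => a + t * d) d 0 := by
    simpa using ((hasDerivAt_id (0 : ℝ)).mul_const d).const_add a
  have hmul_log := (hasDerivAt_mul_log (by simpa using ha : a + 0 * d ≠ 0)).comp 0 hline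
  simpa [Function.comp_def, mul_comm] using hmul_log

theorem hasDerivAt_sum_affine_mul {ι : Type*} [Fintype ι] (x d c : ι → ℝ) :
    HasDerivAt (fun t => ∑ k, (x k + t * d k) * c k) (∑ k, d k * c k) 0 :=
  HasDerivAt.fun_sum fun k _ =>
    by simpa using (((hasDerivAt_id (0 : ℝ)).mul_const (d k)).const_add (x k)).mul_const (c k)

theorem hasDerivAt_sum_affine_mul_log {ι : Type*} [Fintype ι] (x d : ι → ℝ)
    (hx : ∀ k, x k ≠ 0) :
    HasDerivAt (fun t => ∑ k, (x k + t * d k) * log (x k + t * d k))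
      (∑ k, d k * (log (x k) + 1)) 0 :=
  HasDerivAt.fun_sum fun k _ => hasDerivAt_affine_mul_log (hx k) (d k)

theorem hasDerivAt_miraObjective_line {B K : ℕ} [NeZero B] (β : ℝ) (P W D : Fin B → Fin K → ℝ)
    (hW : ∀ i j, 0 < W i j) :
    HasDerivAt (fun t => miraObjective β P (fun i j => W i j + t * D i j))
      (-(1 / (B : ℝ)) * ∑ i, ∑ j, D i j * log (P i j)
        + ((1 - β) / (B : ℝ)) * ∑ i, ∑ j, D i j * (log (W i j) + 1)
        + β * ∑ j, ((1 / (B : ℝ)) * ∑ i, D i j) * (log ((1 / (B : ℝ)) * ∑ i, W i j) + 1)) 0 := by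
  have hmean : ∀ t j, (1 / (B : ℝ)) * ∑ i, (W i j + t * D i j)
      = (1 / (B : ℝ)) * ∑ i, W i j + t * ((1 / (B : ℝ)) * ∑ i, D i j) := by
    intro t j
    rw [sum_add_distrib, ← mul_sum]
    ring
  have hmean_ne : ∀ j, (1 / (B : ℝ)) * ∑ i, W i j ≠ 0 := fun j => by
    have := sum_pos (fun i _ => hW i j) univ_nonempty
    have : (0 : ℝ) < B := Nat.cast_pos.2 (NeZero.pos B)
    positivity
  simp only [miraObjective, hmean]
  exact (((HasDerivAt.fun_sum fun i _ => hasDerivAt_sum_affine_mul (W i) (D i) _).const_mul _).add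
    ((HasDerivAt.fun_sum fun i _ =>
      hasDerivAt_sum_affine_mul_log (W i) (D i) fun j => (hW i j).ne').const_mul _)).add
    ((hasDerivAt_sum_affine_mul_log _ _ hmean_ne).const_mul β)

theorem isLocalMin_line_of_le_rowStochastic {ι κ : Type*} [Finite ι] [Fintype κ]
    {F : (ι → κ → ℝ) → ℝ} {W D : ι → κ → ℝ} (hW : ∀ i j, 0 < W i j)
    (hWsum : ∀ i, ∑ j, W i j = 1) (hD : ∀ i, ∑ j, D i j = 0)
    (hmin : ∀ V : ι → κ → ℝ, (∀ i j, 0 ≤ V i j) → (∀ i, ∑ j, V i j = 1) → F W ≤ F V) :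
    IsLocalMin (fun t => F (fun i j => W i j + t * D i j)) 0 := by
  have hpos : ∀ᶠ t in 𝓝 (0 : ℝ), ∀ i j, 0 < W i j + t * D i j := by
    refine eventually_all.2 fun i => eventually_all.2 fun j => ?_
    have hcont : Continuous fun t : ℝ => W i j + t * D i j := by fun_prop
    exact continuousAt_const.eventually_lt hcont.continuousAt (by simpa using hW i j)
  filter_upwards [hpos] with t ht
  simp only [zero_mul, add_zero]
  refine hmin _ (fun i j => (ht i j).le) fun i => ?_
  rw [sum_add_distrib, ← mul_sum, hWsum, hD, mul_zero, add_zero]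

theorem miraObjective_stationary {B K : ℕ} {β : ℝ} {P W : Fin B → Fin K → ℝ}
    (hW : ∀ i j, 0 < W i j) (hWsum : ∀ i, ∑ j, W i j = 1)
    (hmin : ∀ V : Fin B → Fin K → ℝ, (∀ i j, 0 ≤ V i j) → (∀ i, ∑ j, V i j = 1) →
      miraObjective β P W ≤ miraObjective β P V)
    (i : Fin B) {v : Fin K → ℝ} (hv : ∑ k, v k = 0) :
    ∑ k, v k * ((1 - β) * log (W i k) - log (P i k)
      + β * log ((1 / (B : ℝ)) * ∑ i', W i' k)) = 0 := by
  have : NeZero B := ⟨i.pos.ne'⟩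
  set D : Fin B → Fin K → ℝ := fun i' k => if i' = i then v k else 0
  have hD : ∀ i', ∑ k, D i' k = 0 := fun i' => by
    by_cases h : i' = i <;> simp [D, h, hv]
  have hderiv := (isLocalMin_line_of_le_rowStochastic hW hWsum hD hmin).hasDerivAt_eq_zero
    (hasDerivAt_miraObjective_line β P W D hW)
  have hrow : ∀ g : Fin B → Fin K → ℝ, ∑ i', ∑ k, D i' k * g i' k = ∑ k, v k * g i k :=
    fun g => by simp [D, ite_mul]
  have hcol : ∀ h : Fin K → ℝ, ∑ k, ((1 / (B : ℝ)) * ∑ i', D i' k) * h k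
      = (1 / (B : ℝ)) * ∑ k, v k * h k := fun h => by simp [D, mul_sum, mul_assoc]
  rw [hrow, hrow, hcol] at hderiv
  have hB : (1 / (B : ℝ)) ≠ 0 := by simp [NeZero.ne B]
  -- the `+ 1` terms of the first variation drop out because `∑ k, v k = 0`
  have hconst : ∀ c : Fin K → ℝ, ∑ k, v k * (c k + 1) = ∑ k, v k * c k := fun c => by
    simp [mul_add, sum_add_distrib, hv]
  rw [hconst, hconst] at hderiv
  simp only [mul_add, mul_sub, sum_add_distrib, sum_sub_distrib, ← mul_sum,
    mul_left_comm (v _)] at hderiv ⊢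
  apply mul_left_cancel₀ hB
  linear_combination hderiv

theorem eq_of_forall_sum_mul_eq_zero {ι : Type*} [Fintype ι] [DecidableEq ι] {g : ι → ℝ}
    (hg : ∀ v : ι → ℝ, ∑ k, v k = 0 → ∑ k, v k * g k = 0) (j l : ι) : g j = g l := by
  have h := hg (Pi.single j 1 - Pi.single l 1) (by simp)
  simp only [Pi.sub_apply, sub_mul, sum_sub_distrib, Pi.single_apply, ite_mul, one_mul,
    zero_mul, sum_ite_eq', mem_univ, if_true] at h
  linarith

theorem eq_div_sum_of_eq_mul {ι : Type*} [Fintype ι] {w q : ι → ℝ} {c : ℝ}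
    (hw : ∀ k, w k = c * q k) (hsum : ∑ k, w k = 1) (k : ι) : w k = q k / ∑ k', q k' := by
  simp only [hw, ← mul_sum] at hsum ⊢
  have hq : ∑ k', q k' ≠ 0 := right_ne_zero_of_mul_eq_one hsum
  field_simp
  linear_combination q k * hsum

theorem stmt_8_general (B K : ℕ) (β : ℝ) (hβ1 : β < 1)
    (P : Fin B → Fin K → ℝ) (hP : ∀ i j, 0 < P i j)
    (f : (Fin B → Fin K → ℝ) → ℝ)
    (hf : ∀ W, f W =
      -(1 / (B : ℝ)) * ∑ i, ∑ j, W i j * Real.log (P i j)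
        + ((1 - β) / (B : ℝ)) * ∑ i, ∑ j, W i j * Real.log (W i j)
        + β * ∑ j, ((1 / (B : ℝ)) * ∑ i, W i j) *
            Real.log ((1 / (B : ℝ)) * ∑ i, W i j))
    (W : Fin B → Fin K → ℝ)
    (hWpos : ∀ i j, 0 < W i j) (hWsum : ∀ i, ∑ j, W i j = 1)
    (hmin : ∀ V : Fin B → Fin K → ℝ,
      (∀ i j, 0 ≤ V i j) → (∀ i, ∑ j, V i j = 1) → f W ≤ f V) :
    ∀ i j, W i j =
      ((1 / (B : ℝ)) * ∑ i', W i' j) ^ (-β / (1 - β)) * P i j ^ ((1 : ℝ) / (1 - β)) /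
        ∑ k, ((1 / (B : ℝ)) * ∑ i', W i' k) ^ (-β / (1 - β)) *
          P i k ^ ((1 : ℝ) / (1 - β)) := by
  intro i j
  obtain rfl : f = miraObjective β P := funext hf
  have hβ : 1 - β ≠ 0 := by linarith
  have hmean : ∀ k, 0 < (1 / (B : ℝ)) * ∑ i', W i' k := fun k => by
    have := sum_pos (fun i' _ => hWpos i' k) ⟨i, mem_univ i⟩
    have : (0 : ℝ) < B := Nat.cast_pos.2 i.pos
    positivity
  set g : Fin K → ℝ := fun k => (1 - β) * log (W i k) - log (P i k)
    + β * log ((1 / (B : ℝ)) * ∑ i', W i' k)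
  have hg : ∀ k, g k = g j := fun k =>
    eq_of_forall_sum_mul_eq_zero (fun v hv => miraObjective_stationary hWpos hWsum hmin i hv) k j
  refine eq_div_sum_of_eq_mul (c := exp (g j / (1 - β)))
    (q := fun k => ((1 / (B : ℝ)) * ∑ i', W i' k) ^ (-β / (1 - β)) * P i k ^ ((1 : ℝ) / (1 - β)))
    (fun k => ?_) (hWsum i) j
  rw [rpow_def_of_pos (hmean k), rpow_def_of_pos (hP i k), ← exp_add, ← exp_add, ← hg k,
    ← exp_log (hWpos i k)]
  congr 1
  simp only [g]
  field_simp
  ring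

/-- KKT condition: if `W*` with strictly positive rows summing to one minimizes the
MIRA objective over matrices with rows in the simplex, then
`w*ᵢⱼ = (w̄*ⱼ)^(-β/(1-β)) pᵢⱼ^(1/(1-β)) / ∑ₖ (w̄*ₖ)^(-β/(1-β)) pᵢₖ^(1/(1-β))`. -/
theorem stmt_8 (B K : ℕ) (hB : 0 < B) (hK : 0 < K)
    (β : ℝ) (hβ0 : 0 ≤ β) (hβ1 : β < 1)
    (P : Fin B → Fin K → ℝ) (hP : ∀ i j, 0 < P i j)
    (f : (Fin B → Fin K → ℝ) → ℝ)
    (hf : ∀ W, f W =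
      -(1 / (B : ℝ)) * ∑ i, ∑ j, W i j * Real.log (P i j)
        + ((1 - β) / (B : ℝ)) * ∑ i, ∑ j, W i j * Real.log (W i j)
        + β * ∑ j, ((1 / (B : ℝ)) * ∑ i, W i j) *
            Real.log ((1 / (B : ℝ)) * ∑ i, W i j))
    (W : Fin B → Fin K → ℝ)
    (hWpos : ∀ i j, 0 < W i j) (hWsum : ∀ i, ∑ j, W i j = 1)
    (hmin : ∀ V : Fin B → Fin K → ℝ,
      (∀ i j, 0 ≤ V i j) → (∀ i, ∑ j, V i j = 1) → f W ≤ f V) :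
    ∀ i j, W i j =
      ((1 / (B : ℝ)) * ∑ i', W i' j) ^ (-β / (1 - β)) * P i j ^ ((1 : ℝ) / (1 - β)) /
        ∑ k, ((1 / (B : ℝ)) * ∑ i', W i' k) ^ (-β / (1 - β)) *
          P i k ^ ((1 : ℝ) / (1 - β)) :=
  stmt_8_general B K β hβ1 P hP f hf W hWpos hWsum hmin
end
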